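/- Let Γ be a finite directed graph and let L be a closed inverse subsemigroup of S(Γ) of finite chain type with minimal element (w,w). Then L has infinite index in S(Γ) if and only if there exist a nonempty directed circuit c in Γ and a (possibly empty) directed path g from some vertex v₀ of w to a vertex of c, such that g has no edge in common with c or with w. -/

import Mathlib

/-- A (finite) directed graph: vertices, edges, and source/target maps. -/
structure DGraph where
  V : Type
  E : Type
  src : E → V
  tgt : E → V

namespace DGraph

/-- The vertex reached after traversing a list of edges from a vertex. -/
def walkEnd (G : DGraph) : G.V → List G.E → G.V
  | v, [] => v
  | _, e :: l => walkEnd G (G.tgt e) l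

/-- The list of edges forms a directed walk starting at the given vertex. -/
def IsWalk (G : DGraph) : G.V → List G.E → Prop
  | _, [] => True
  | v, e :: l => G.src e = v ∧ IsWalk G (G.tgt e) l

variable (G : DGraph)

@[simp] theorem walkEnd_nil (v : G.V) : G.walkEnd v [] = v := rfl
@[simp] theorem walkEnd_cons (v : G.V) (e : G.E) (l : List G.E) :
    G.walkEnd v (e :: l) = G.walkEnd (G.tgt e) l := rfl
@[simp] theorem isWalk_nil (v : G.V) : G.IsWalk v [] := trivial
@[simp] theorem isWalk_cons (v : G.V) (e : G.E) (l : List G.E) :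
    G.IsWalk v (e :: l) ↔ G.src e = v ∧ G.IsWalk (G.tgt e) l := Iff.rfl

theorem isWalk_append (v : G.V) (l1 l2 : List G.E) :
    G.IsWalk v (l1 ++ l2) ↔ G.IsWalk v l1 ∧ G.IsWalk (G.walkEnd v l1) l2 := by
  induction l1 generalizing v with
  | nil => simp [IsWalk, walkEnd]
  | cons e l ih => simp [IsWalk, walkEnd, ih, and_assoc]

/-- A directed path in `G`: an initial vertex together with a compatible
list of edges, traversed in order (empty paths are allowed). -/
structure DPath (G : DGraph) where
  first : G.V
  edges : List G.E
  wf : G.IsWalk first edges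

namespace DPath

variable {G}

/-- The terminal vertex of a directed path. -/
def last (p : G.DPath) : G.V := G.walkEnd p.first p.edges

/-- The list of vertices lying on a directed path. -/
def vertexList (p : G.DPath) : List G.V := p.first :: p.edges.map G.tgt

/-- `q` is a suffix (terminal segment) of `p`: `p = l ⬝ q` for some edge list `l`. -/
def IsSuffixOf (q p : G.DPath) : Prop :=
  ∃ l : List G.E, p.edges = l ++ q.edges ∧ q.first = G.walkEnd p.first l

end DPath

theorem isWalk_chopAppend {u v w : G.DPath} (hs : v.IsSuffixOf u) (hvw : v.first = w.first) :
    G.IsWalk u.first (u.edges.take (u.edges.length - v.edges.length) ++ w.edges) := by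
  obtain ⟨l, hl, hfst⟩ := hs
  rw [hl]
  have hlen : (l ++ v.edges).length - v.edges.length = l.length := by simp
  rw [hlen, List.take_left, G.isWalk_append]
  have hu := u.wf
  rw [hl, G.isWalk_append] at hu
  refine ⟨hu.1, ?_⟩
  rw [← hfst, hvw]
  exact w.wf

theorem isWalk_concat {p q : G.DPath} (h : q.first = p.last) :
    G.IsWalk p.first (p.edges ++ q.edges) := by
  rw [G.isWalk_append]
  refine ⟨p.wf, ?_⟩
  show G.IsWalk p.last q.edges
  rw [← h]
  exact q.wf

/-- Concatenation of composable directed paths. -/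
def concatPath (p q : G.DPath) (h : q.first = p.last) : G.DPath :=
  ⟨p.first, p.edges ++ q.edges, G.isWalk_concat h⟩

theorem isWalk_replicate (a : G.E) (h : G.tgt a = G.src a) (m : ℕ) :
    G.IsWalk (G.src a) (List.replicate m a) := by
  induction m with
  | zero => trivial
  | succ n ih => rw [List.replicate_succ, G.isWalk_cons]; exact ⟨rfl, by rw [h]; exact ih⟩

/-- The path traversing a loop `a` exactly `m` times. -/
def loopPow (a : G.E) (h : G.tgt a = G.src a) (m : ℕ) : G.DPath :=
  ⟨G.src a, List.replicate m a, G.isWalk_replicate a h m⟩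

/-- `p` is a nonempty directed circuit. -/
def IsCircuit (p : G.DPath) : Prop := p.edges ≠ [] ∧ p.last = p.first

/-- `p` and `d` share no nontrivial common prefix (initial segment). -/
def NoCommonPrefix (p d : G.DPath) : Prop :=
  ∀ l : List G.E, l ≠ [] → l <+: p.edges → ¬ l <+: d.edges

end DGraph

/-- The underlying set of the graph inverse semigroup `S(Γ)`: pairs of directed
paths with the same initial vertex, together with a zero element. -/
inductive GIS (G : DGraph) where
  | zero : GIS G
  | pair (a b : G.DPath) (h : a.first = b.first) : GIS G

namespace GIS

open scoped Classical in
/-- The multiplication of the graph inverse semigroup: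
`(t,u)(v,w) = (t,pw)` if `u = pv`, `(pt,w)` if `v = pu`, and `0` otherwise. -/
noncomputable def mul {G : DGraph} : GIS G → GIS G → GIS G
  | .zero, _ => .zero
  | .pair _ _ _, .zero => .zero
  | .pair t u h1, .pair v w h2 =>
    if hs : v.IsSuffixOf u then
      .pair t ⟨t.first, u.edges.take (u.edges.length - v.edges.length) ++ w.edges,
        by rw [h1]; exact G.isWalk_chopAppend hs h2⟩ rfl
    else if hs' : u.IsSuffixOf v then
      .pair ⟨v.first, v.edges.take (v.edges.length - u.edges.length) ++ t.edges,
        G.isWalk_chopAppend hs' h1.symm⟩ w h2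
    else .zero

noncomputable instance {G : DGraph} : Mul (GIS G) := ⟨GIS.mul⟩

/-- The inverse: `(v,w)⁻¹ = (w,v)` and `0⁻¹ = 0`. -/
def inv {G : DGraph} : GIS G → GIS G
  | .zero => .zero
  | .pair a b h => .pair b a h.symm

/-- The natural partial order: `x ≤ y` iff `x = e * y` for some idempotent `e`. -/
def le {G : DGraph} (x y : GIS G) : Prop := ∃ e : GIS G, e * e = e ∧ x = e * y

end GIS

/-- `L` is a closed inverse subsemigroup of `S(Γ)`: a nonempty subset closed under
multiplication, inverses, and upward closed in the natural partial order. -/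
def IsCISS (G : DGraph) (L : Set (GIS G)) : Prop :=
  L.Nonempty ∧ (∀ a ∈ L, ∀ b ∈ L, a * b ∈ L) ∧ (∀ a ∈ L, a.inv ∈ L) ∧
    (∀ a ∈ L, ∀ s : GIS G, GIS.le a s → s ∈ L)

/-- The closed inverse subsemigroup `↑{(u,u)}` of (finite) chain type:
all `(q,q)` with `q` a suffix of `u`. -/
def chainSet (G : DGraph) (u : G.DPath) : Set (GIS G) :=
  {x | ∃ q : G.DPath, q.IsSuffixOf u ∧ x = GIS.pair q q rfl}

/-- The edge list of the `r`-th power of the path `p`. -/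
def powEdges {G : DGraph} (p : G.DPath) (r : ℕ) : List G.E :=
  (List.replicate r p.edges).flatten

/-- The closed inverse subsemigroup of cycle type
`L_{p,d} = {(v p^r d, v p^s d) : r,s ≥ 0, v a suffix of p} ∪ {(q,q) : q a suffix of d}`. -/
def cycleSet (G : DGraph) (p d : G.DPath) : Set (GIS G) :=
  {x | (∃ (r s : ℕ) (v a b : G.DPath) (h : a.first = b.first),
          v.IsSuffixOf p ∧ x = GIS.pair a b h ∧
          a.first = v.first ∧ a.edges = v.edges ++ powEdges p r ++ d.edges ∧
          b.first = v.first ∧ b.edges = v.edges ++ powEdges p s ++ d.edges) ∨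
       (∃ q : G.DPath, q.IsSuffixOf d ∧ x = GIS.pair q q rfl)}

/-- `L` is a chain of idempotents: all elements are idempotent and any two are
comparable in the natural partial order. -/
def IsChainOfIdem (G : DGraph) (L : Set (GIS G)) : Prop :=
  (∀ x ∈ L, x * x = x) ∧ ∀ x ∈ L, ∀ y ∈ L, GIS.le x y ∨ GIS.le y x

/-- The set of right cosets `↑(Lt)` (for `t` with `t t⁻¹ ∈ L`) of a closed inverse
subsemigroup `L`. -/
def cosets (G : DGraph) (L : Set (GIS G)) : Set (Set (GIS G)) :=
  {C | ∃ t : GIS G, t * t.inv ∈ L ∧ C = {s | ∃ x ∈ L, GIS.le (x * t) s}}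

/-- `H` and `K` are conjugate: for some `s`, `s⁻¹Hs ⊆ K` and `sKs⁻¹ ⊆ H`. -/
def Conjugate (G : DGraph) (H K : Set (GIS G)) : Prop :=
  ∃ s : GIS G, (∀ h ∈ H, s.inv * h * s ∈ K) ∧ (∀ k ∈ K, s * k * s.inv ∈ H)

/-- The set of directed paths with initial vertex `v` whose first edge (if any)
is not an edge of `w`. -/
def Npaths (G : DGraph) (v : G.V) (w : G.DPath) : Set G.DPath :=
  {t | t.first = v ∧ ∀ e, t.edges.head? = some e → e ∉ w.edges}

/-!
Write `L = ↑(w,w)`. A coset `↑(L t)` needs `t = (a,b)` with `a` a suffix of `w`, and every element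
of `↑(L (a,b))` has second component with at most `|w|` more edges than `b`. Hence if a circuit
is reachable from `w` along `g`, winding round it ever more often gives elements `(q, g C^n)` that
lie in infinitely many distinct cosets. Conversely, if every path starting on `w` has fewer edges
than `Γ` has vertices, only finitely many `t` qualify; otherwise such a path revisits a vertex,
which yields a circuit reachable from `w`, and a shortest connecting path avoids the edges of the
circuit and of `w`.
-/

namespace DGraph

variable {G : DGraph}

theorem walkEnd_append (v : G.V) (l₁ l₂ : List G.E) :
    G.walkEnd v (l₁ ++ l₂) = G.walkEnd (G.walkEnd v l₁) l₂ := by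
  induction l₁ generalizing v with
  | nil => rfl
  | cons e l ih => exact ih _

theorem IsWalk.take {v : G.V} {l : List G.E} (h : G.IsWalk v l) (n : ℕ) :
    G.IsWalk v (l.take n) :=
  ((G.isWalk_append v _ _).1 ((List.take_append_drop n l).symm ▸ h)).1

theorem IsWalk.drop {v : G.V} {l : List G.E} (h : G.IsWalk v l) (n : ℕ) :
    G.IsWalk (G.walkEnd v (l.take n)) (l.drop n) :=
  ((G.isWalk_append v _ _).1 ((List.take_append_drop n l).symm ▸ h)).2

theorem mem_cons_map_tgt_iff {v x : G.V} {l : List G.E} :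
    x ∈ v :: l.map G.tgt ↔ ∃ n ≤ l.length, G.walkEnd v (l.take n) = x := by
  induction l generalizing v with
  | nil => simp [eq_comm]
  | cons e l ih =>
    rw [List.map_cons, List.mem_cons, ih, List.length_cons]
    constructor
    · rintro (rfl | ⟨n, hn, rfl⟩)
      · exact ⟨0, by omega, rfl⟩
      · exact ⟨n + 1, by omega, rfl⟩
    · rintro ⟨_ | n, hn, rfl⟩
      · exact .inl rfl
      · exact .inr ⟨n, by omega, rfl⟩

def IsClosedWalk (v : G.V) (C : List G.E) : Prop :=
  G.IsWalk v C ∧ G.walkEnd v C = v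

theorem IsClosedWalk.flatten_replicate {v : G.V} {C : List G.E} (hC : G.IsClosedWalk v C)
    (n : ℕ) : G.IsClosedWalk v (List.replicate n C).flatten := by
  induction n with
  | zero => exact ⟨trivial, rfl⟩
  | succ n ih =>
    rw [List.replicate_succ, List.flatten_cons, IsClosedWalk, G.isWalk_append, walkEnd_append,
      hC.2]
    exact ⟨⟨hC.1, ih.1⟩, ih.2⟩

namespace DPath

attribute [ext] DPath

def take (p : G.DPath) (n : ℕ) : G.DPath :=
  ⟨p.first, p.edges.take n, p.wf.take n⟩

def drop (p : G.DPath) (n : ℕ) : G.DPath :=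
  ⟨(p.take n).last, p.edges.drop n, p.wf.drop n⟩

theorem last_drop (p : G.DPath) (n : ℕ) : (p.drop n).last = p.last := by
  conv_rhs => rw [last, ← List.take_append_drop n p.edges, walkEnd_append]
  rfl

theorem last_take_drop (p : G.DPath) (m n : ℕ) :
    ((p.drop m).take n).last = (p.take (m + n)).last := by
  simp only [last, take, drop, List.take_add, walkEnd_append]

theorem first_mem_vertexList (p : G.DPath) : p.first ∈ p.vertexList :=
  List.mem_cons_self

theorem tgt_mem_vertexList {p : G.DPath} {e : G.E} (h : e ∈ p.edges) :
    G.tgt e ∈ p.vertexList :=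
  List.mem_cons_of_mem _ (List.mem_map_of_mem h)

theorem mem_vertexList_iff {p : G.DPath} {x : G.V} :
    x ∈ p.vertexList ↔ ∃ n ≤ p.edges.length, (p.take n).last = x :=
  mem_cons_map_tgt_iff

theorem exists_take_drop_of_mem {p : G.DPath} {e : G.E} (he : e ∈ p.edges) :
    ∃ n < p.edges.length, (p.take n).last = G.src e ∧ (p.drop (n + 1)).first = G.tgt e := by
  obtain ⟨s, t, hst⟩ := List.append_of_mem he
  have hwalk := p.wf
  rw [hst, G.isWalk_append] at hwalk
  refine ⟨s.length, by simp [hst], ?_, ?_⟩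
  · simp only [last, take, hst, List.take_left]
    exact hwalk.2.1.symm
  · simp [drop, last, take, hst, List.take_append, walkEnd_append]

theorem src_mem_vertexList {p : G.DPath} {e : G.E} (h : e ∈ p.edges) :
    G.src e ∈ p.vertexList := by
  obtain ⟨n, hn, hsrc, -⟩ := exists_take_drop_of_mem h
  exact mem_vertexList_iff.2 ⟨n, hn.le, hsrc⟩

theorem IsSuffixOf.refl (p : G.DPath) : p.IsSuffixOf p := ⟨[], rfl, rfl⟩

theorem IsSuffixOf.length_le {p q : G.DPath} (h : q.IsSuffixOf p) :
    q.edges.length ≤ p.edges.length := by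
  obtain ⟨l, hl, -⟩ := h
  simp [hl]

theorem drop_isSuffixOf (p : G.DPath) (n : ℕ) : (p.drop n).IsSuffixOf p :=
  ⟨p.edges.take n, (List.take_append_drop n p.edges).symm, rfl⟩

theorem IsSuffixOf.total {q r w : G.DPath} (hq : q.IsSuffixOf w) (hr : r.IsSuffixOf w) :
    q.IsSuffixOf r ∨ r.IsSuffixOf q := by
  obtain ⟨l₁, e₁, f₁⟩ := hq
  obtain ⟨l₂, e₂, f₂⟩ := hr
  rcases List.prefix_or_prefix_of_prefix ⟨q.edges, e₁.symm⟩ ⟨r.edges, e₂.symm⟩ with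
    ⟨l, rfl⟩ | ⟨l, rfl⟩
  · refine .inr ⟨l, List.append_cancel_left (e₁.symm.trans (e₂.trans (List.append_assoc ..))), ?_⟩
    rw [f₁, f₂, walkEnd_append]
  · refine .inl ⟨l, List.append_cancel_left (e₂.symm.trans (e₁.trans (List.append_assoc ..))), ?_⟩
    rw [f₁, f₂, walkEnd_append]

theorem mem_vertexList_iff_exists_isSuffixOf {p : G.DPath} {x : G.V} :
    x ∈ p.vertexList ↔ ∃ q : G.DPath, q.IsSuffixOf p ∧ q.first = x := by
  rw [mem_vertexList_iff]
  constructor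
  · rintro ⟨n, -, rfl⟩
    exact ⟨p.drop n, p.drop_isSuffixOf n, rfl⟩
  · rintro ⟨q, ⟨l, hl, hq⟩, rfl⟩
    exact ⟨l.length, by simp [hl], by simp [last, take, hl, hq]⟩

theorem finite_setOf_first_mem_length_lt [Finite G.E] {s : Set G.V} (hs : s.Finite)
    (N : ℕ) : {p : G.DPath | p.first ∈ s ∧ p.edges.length < N}.Finite :=
  Set.Finite.preimage (f := fun p : G.DPath => (p.first, p.edges))
    (fun _ _ _ _ h => DPath.ext (congrArg Prod.fst h) (congrArg Prod.snd h))
    (hs.prod (List.finite_length_lt G.E N))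

end DPath

theorem IsCircuit.exists_isClosedWalk {c : G.DPath} (hc : G.IsCircuit c) {v : G.V}
    (hv : v ∈ c.vertexList) : ∃ C : List G.E, C ≠ [] ∧ G.IsClosedWalk v C := by
  obtain ⟨n, -, rfl⟩ := DPath.mem_vertexList_iff.1 hv
  have hend : G.walkEnd (c.take n).last (c.edges.drop n) = c.first :=
    (c.last_drop n).trans hc.2
  refine ⟨c.edges.drop n ++ c.edges.take n, ?_, ?_, ?_⟩
  · rw [Ne, List.append_eq_nil_iff, and_comm, ← List.append_eq_nil_iff, List.take_append_drop]
    exact hc.1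
  · rw [G.isWalk_append, hend]
    exact ⟨(c.drop n).wf, (c.take n).wf⟩
  · rw [walkEnd_append, hend]
    rfl

/-- By pigeonhole, a path with at least `card G.V` edges revisits a vertex. -/
theorem exists_isCircuit_of_card_le_length [Fintype G.V] (p : G.DPath)
    (hp : Fintype.card G.V ≤ p.edges.length) :
    ∃ g c : G.DPath, g.first = p.first ∧ G.IsCircuit c ∧ c.first = g.last := by
  obtain ⟨i, j, hij, hlast⟩ : ∃ i j : Fin (p.edges.length + 1), i < j ∧
      (p.take i).last = (p.take j).last := by
    obtain ⟨i, j, hne, heq⟩ := Fintype.exists_ne_map_eq_of_card_lt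
      (fun i : Fin (p.edges.length + 1) => (p.take i).last) (by simpa using Nat.lt_succ_of_le hp)
    rcases lt_or_gt_of_ne hne with h | h
    · exact ⟨i, j, h, heq⟩
    · exact ⟨j, i, h, heq.symm⟩
  refine ⟨p.take i, (p.drop i).take (j - i), rfl, ⟨?_, ?_⟩, rfl⟩
  · have := j.is_lt
    simp only [DPath.take, DPath.drop, Ne, List.take_eq_nil_iff, List.drop_eq_nil_iff]
    omega
  · rw [DPath.last_take_drop, Nat.add_sub_cancel' hij.le, ← hlast]
    rfl

/-- A shortest path from the vertices of `w` to those of `c` uses no edge of `c` or `w`. -/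
theorem exists_path_forall_edges_not_mem (c w g : G.DPath) (hg₁ : g.first ∈ w.vertexList)
    (hg₂ : g.last ∈ c.vertexList) :
    ∃ g' : G.DPath, g'.first ∈ w.vertexList ∧ g'.last ∈ c.vertexList ∧
      ∀ e ∈ g'.edges, e ∉ c.edges ∧ e ∉ w.edges := by
  induction hn : g.edges.length using Nat.strong_induction_on generalizing g with
  | _ n ih =>
  by_cases hdisj : ∀ e ∈ g.edges, e ∉ c.edges ∧ e ∉ w.edges
  · exact ⟨g, hg₁, hg₂, hdisj⟩
  push Not at hdisj
  obtain ⟨e, he, hew⟩ := hdisj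
  obtain ⟨k, hk, hsrc, htgt⟩ := DPath.exists_take_drop_of_mem he
  by_cases hec : e ∈ c.edges
  · exact ih k (hn ▸ hk) (g.take k) hg₁ (hsrc ▸ DPath.src_mem_vertexList hec)
      (by simp [DPath.take]; omega)
  · exact ih (g.edges.length - (k + 1)) (by omega) (g.drop (k + 1))
      (htgt ▸ DPath.tgt_mem_vertexList (hew hec)) (g.last_drop _ ▸ hg₂) (by simp [DPath.drop])

end DGraph

namespace GIS

open DGraph DPath

variable {G : DGraph}

theorem pair_mul_inv (a b : G.DPath) (h : a.first = b.first) :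
    pair a b h * (pair a b h).inv = pair a a rfl := by
  change GIS.mul _ _ = _
  simp only [GIS.mul, inv, dif_pos (IsSuffixOf.refl b)]
  congr 1
  ext1 <;> simp [h]

theorem pair_self_mul (a b : G.DPath) (h : a.first = b.first) :
    pair a a rfl * pair a b h = pair a b h := by
  change GIS.mul _ _ = _
  simp only [GIS.mul, dif_pos (IsSuffixOf.refl a)]
  congr 1
  ext1 <;> simp [h]

theorem isSuffix_of_mul_pair_eq_pair {e : GIS G} {a b A B : G.DPath} {h : a.first = b.first}
    {hAB : A.first = B.first} (hE : e * pair a b h = pair A B hAB) : b.edges <:+ B.edges := by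
  cases e with
  | zero => cases hE
  | pair t u htu =>
    change GIS.mul _ _ = _ at hE
    dsimp only [GIS.mul] at hE
    split_ifs at hE <;> cases hE
    · exact List.suffix_append _ _
    · exact List.suffix_refl _

theorem exists_mul_eq_pair_length_le {w r a b : G.DPath} (hr : r.IsSuffixOf w)
    (ha : a.IsSuffixOf w) (h : a.first = b.first) :
    ∃ (A B : G.DPath) (hAB : A.first = B.first), pair r r rfl * pair a b h = pair A B hAB ∧
      B.edges.length ≤ w.edges.length + b.edges.length := by
  change ∃ A B hAB, GIS.mul _ _ = _ ∧ _
  dsimp only [GIS.mul]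
  split_ifs with has hra
  · have := hr.length_le
    exact ⟨_, _, by rfl, rfl, by simp only [List.length_append, List.length_take]; omega⟩
  · exact ⟨_, _, by exact h, rfl, by omega⟩
  · exact ((ha.total hr).elim has hra).elim

def rightCoset (L : Set (GIS G)) (t : GIS G) : Set (GIS G) :=
  {s | ∃ x ∈ L, GIS.le (x * t) s}

theorem cosets_eq_image (L : Set (GIS G)) :
    cosets G L = rightCoset L '' {t | t * t.inv ∈ L} := by
  ext C
  exact ⟨fun ⟨t, ht, hC⟩ => ⟨t, ht, hC.symm⟩, fun ⟨t, ht, hC⟩ => ⟨t, ht, hC.symm⟩⟩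

variable {w : G.DPath}

theorem exists_pair_of_mul_inv_mem_chainSet {t : GIS G} (ht : t * t.inv ∈ chainSet G w) :
    ∃ a b h, t = pair a b h ∧ a.IsSuffixOf w := by
  cases t with
  | zero => obtain ⟨_, -, h⟩ := ht; cases h
  | pair a b h =>
    obtain ⟨q, hq, hpair⟩ := ht
    rw [pair_mul_inv] at hpair
    cases hpair
    exact ⟨a, b, h, rfl, hq⟩

theorem pair_mem_rightCoset_self {a b : G.DPath} (ha : a.IsSuffixOf w) (h : a.first = b.first) :
    pair a b h ∈ rightCoset (chainSet G w) (pair a b h) :=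
  ⟨pair a a rfl, ⟨a, ha, rfl⟩, pair a a rfl, pair_self_mul a a rfl, rfl⟩

theorem length_le_of_pair_mem_rightCoset {a b a' b' : G.DPath} (ha : a.IsSuffixOf w)
    {h : a.first = b.first} {h' : a'.first = b'.first}
    (hmem : pair a' b' h' ∈ rightCoset (chainSet G w) (pair a b h)) :
    b'.edges.length ≤ w.edges.length + b.edges.length := by
  obtain ⟨_, ⟨r, hr, rfl⟩, e, -, hle⟩ := hmem
  obtain ⟨A, B, hAB, hprod, hB⟩ := exists_mul_eq_pair_length_le hr ha h
  rw [hprod] at hle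
  exact (isSuffix_of_mul_pair_eq_pair hle.symm).length_le.trans hB

theorem cosets_chainSet_infinite_of_length_gap {q : G.DPath} (hq : q.IsSuffixOf w)
    (b : ℕ → G.DPath) (hb : ∀ n, q.first = (b n).first)
    (hgap : ∀ m n, m < n → w.edges.length + (b m).edges.length < (b n).edges.length) :
    (cosets G (chainSet G w)).Infinite := by
  rw [cosets_eq_image]
  refine Set.infinite_of_injective_forall_mem
    (f := fun n => rightCoset (chainSet G w) (pair q (b n) (hb n)))
    (Function.Injective.of_lt_imp_ne fun m n hmn heq => ?_) fun n => ⟨_, ?_, rfl⟩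
  · have := length_le_of_pair_mem_rightCoset hq (heq ▸ pair_mem_rightCoset_self hq (hb n))
    exact (hgap m n hmn).not_ge this
  · change _ ∈ chainSet G w
    rw [pair_mul_inv]
    exact ⟨q, hq, rfl⟩

theorem cosets_chainSet_finite_of_length_lt [Finite G.E] (N : ℕ)
    (h : ∀ p : G.DPath, p.first ∈ w.vertexList → p.edges.length < N) :
    (cosets G (chainSet G w)).Finite := by
  classical
  set P := {p : G.DPath | p.first ∈ w.vertexList}
  have hP : P.Finite := (DPath.finite_setOf_first_mem_length_lt w.vertexList.finite_toSet N).subset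
    fun p hp => ⟨hp, h p hp⟩
  have hT : {t : GIS G | t * t.inv ∈ chainSet G w} ⊆
      (fun ab : G.DPath × G.DPath =>
        if hab : ab.1.first = ab.2.first then pair ab.1 ab.2 hab else zero) '' (P ×ˢ P) := by
    intro t ht
    obtain ⟨a, b, hab, rfl, ha⟩ := exists_pair_of_mul_inv_mem_chainSet ht
    have haw : a.first ∈ w.vertexList := mem_vertexList_iff_exists_isSuffixOf.2 ⟨a, ha, rfl⟩
    exact ⟨(a, b), ⟨haw, show b.first ∈ w.vertexList from hab ▸ haw⟩, dif_pos hab⟩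
  rw [cosets_eq_image]
  exact (((hP.prod hP).image _).subset hT).image _

theorem cosets_chainSet_infinite_of_isClosedWalk {g : G.DPath} {C : List G.E}
    (hg : g.first ∈ w.vertexList) (hC : G.IsClosedWalk g.last C) (hne : C ≠ []) :
    (cosets G (chainSet G w)).Infinite := by
  obtain ⟨q, hq, hqg⟩ := mem_vertexList_iff_exists_isSuffixOf.1 hg
  -- going round `C` `|w| + 1` times per step adds more than `|w|` edges, separating the cosets
  set D := (List.replicate (w.edges.length + 1) C).flatten
  have hD : G.IsClosedWalk g.last D := hC.flatten_replicate _
  have hDlen : w.edges.length < D.length := by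
    have := List.length_pos_iff.2 hne
    simp only [D, List.length_flatten, List.map_replicate, List.sum_replicate, smul_eq_mul]
    nlinarith
  refine cosets_chainSet_infinite_of_length_gap hq
    (fun n => G.concatPath g ⟨g.last, (List.replicate n D).flatten, (hD.flatten_replicate n).1⟩ rfl)
    (fun _ => hqg) fun m n hmn => ?_
  simp only [concatPath, List.length_append, List.length_flatten, List.map_replicate,
    List.sum_replicate, smul_eq_mul]
  nlinarith

end GIS

/-- a closed inverse subsemigroup of finite chain type with minimal
element `(w,w)` has infinite index iff there is a nonempty directed circuit `c` and
a (possibly empty) path `g` from a vertex of `w` to a vertex of `c` having no edge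
in common with `c` or with `w`. -/
theorem stmt_14 (G : DGraph) [Fintype G.V] [Fintype G.E] (w : G.DPath) :
    (cosets G (chainSet G w)).Infinite ↔
      ∃ c g : G.DPath, G.IsCircuit c ∧
        g.first ∈ w.vertexList ∧ g.last ∈ c.vertexList ∧
        ∀ e ∈ g.edges, e ∉ c.edges ∧ e ∉ w.edges := by
  constructor
  · intro hinf
    obtain ⟨p, hp, hlen⟩ : ∃ p : G.DPath, p.first ∈ w.vertexList ∧
        Fintype.card G.V ≤ p.edges.length := by
      by_contra! h
      exact hinf (GIS.cosets_chainSet_finite_of_length_lt _ h)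
    obtain ⟨g, c, hgp, hc, hcg⟩ := DGraph.exists_isCircuit_of_card_le_length p hlen
    obtain ⟨g', hg'w, hg'c, hdisj⟩ :=
      DGraph.exists_path_forall_edges_not_mem c w g (hgp ▸ hp) (hcg ▸ c.first_mem_vertexList)
    exact ⟨c, g', hc, hg'w, hg'c, hdisj⟩
  · rintro ⟨c, g, hc, hgw, hgc, -⟩
    obtain ⟨C, hne, hC⟩ := hc.exists_isClosedWalk hgc
    exact GIS.cosets_chainSet_infinite_of_isClosedWalk hgw hC hne
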